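/- arXiv:2503.02473 — 3 statements merged into one kernel-verified Lean document; each statement's English description precedes it below -/
import Mathlib

section
/- Under the hypotheses H1 and H2' below, the maximum of the n-th row converges in distribution: for every x > 0, P( max_{1≤j≤n} X_{n,j} ≤ x ) = ∏_{j=1}^n P_{n,j}((0,x]) → exp( − γ([x,∞)) ) as n → ∞. -/
open MeasureTheory Filter Topology Finset Set

/-! The distribution function of the row maximum factorises by independence as
`∏ j, (1 - q n j)` with `q n j = P n j [x, ∞)`. By H2', `q n j ≈ (c n j / d n) γ [x, ∞)` uniformly
in `j`, so `∑ j, q n j → γ [x, ∞)`, and H1 makes `max j, q n j → 0`. Then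
`log (1 - q) = -q + O(q ^ 2)` gives `∑ j, log (1 - q n j) → -γ [x, ∞)`. -/

theorem abs_log_one_sub_add_le {q : ℝ} (h0 : 0 ≤ q) (h : q ≤ 1 / 2) :
    |Real.log (1 - q) + q| ≤ 2 * q ^ 2 := by
  have hq : |q| < 1 := by rw [abs_of_nonneg h0]; linarith
  have := Real.abs_log_sub_add_sum_range_le hq 1
  rw [abs_of_nonneg h0] at this
  norm_num at this
  rw [add_comm]
  refine this.trans ?_
  rw [div_le_iff₀ (by linarith)]
  nlinarith

section TriangularArray

variable {ι : Type*} {s : ℕ → Finset ι} {c q : ℕ → ι → ℝ} {g : ℝ}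

theorem tendsto_sum_of_uniform_scaled (hs : ∀ᶠ n in atTop, (s n).Nonempty)
    (hc : ∀ n, ∀ j ∈ s n, 0 < c n j)
    (hq : ∀ ε > 0, ∀ᶠ n in atTop, ∀ j ∈ s n,
      |(∑ i ∈ s n, c n i) / c n j * q n j - g| < ε) :
    Tendsto (fun n => ∑ j ∈ s n, q n j) atTop (𝓝 g) := by
  rw [Metric.tendsto_nhds]
  intro ε hε
  filter_upwards [hs, hq (ε / 2) (half_pos hε)] with n hne hclose
  set D := ∑ i ∈ s n, c n i
  have hD : 0 < D := sum_pos (hc n) hne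
  have hweights : ∑ j ∈ s n, c n j / D = 1 := by rw [← sum_div, div_self hD.ne']
  have hsplit : ∑ j ∈ s n, q n j - g = ∑ j ∈ s n, c n j / D * (D / c n j * q n j - g) := by
    have hterm : ∀ j ∈ s n, c n j / D * (D / c n j * q n j - g) = q n j - c n j / D * g :=
      fun j hj => by field_simp [(hc n j hj).ne']
    rw [sum_congr rfl hterm, sum_sub_distrib, ← sum_mul, hweights, one_mul]
  rw [Real.dist_eq, hsplit]
  calc |∑ j ∈ s n, c n j / D * (D / c n j * q n j - g)|
      ≤ ∑ j ∈ s n, c n j / D * (ε / 2) := by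
        refine (abs_sum_le_sum_abs _ _).trans (sum_le_sum fun j hj => ?_)
        have hw : 0 ≤ c n j / D := (div_pos (hc n j hj) hD).le
        rw [abs_mul, abs_of_nonneg hw]
        exact mul_le_mul_of_nonneg_left (hclose j hj).le hw
    _ = ε / 2 := by rw [← sum_mul, hweights, one_mul]
    _ < ε := half_lt_self hε

theorem eventually_forall_le_of_uniform_scaled (hc : ∀ n, ∀ j ∈ s n, 0 < c n j)
    (hmax : ∀ ε > 0, ∀ᶠ n in atTop, ∀ j ∈ s n, c n j / ∑ i ∈ s n, c n i < ε)
    (hq : ∀ ε > 0, ∀ᶠ n in atTop, ∀ j ∈ s n,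
      |(∑ i ∈ s n, c n i) / c n j * q n j - g| < ε)
    {δ : ℝ} (hδ : 0 < δ) :
    ∀ᶠ n in atTop, ∀ j ∈ s n, q n j ≤ δ := by
  have hC : 0 < |g| + 1 := by positivity
  filter_upwards [hmax (δ / (|g| + 1)) (by positivity), hq 1 one_pos] with n hsmall hclose j hj
  set D := ∑ i ∈ s n, c n i
  have hcj := hc n j hj
  have hD : 0 < D := sum_pos (hc n) ⟨j, hj⟩
  have hbound : D / c n j * q n j ≤ |g| + 1 := by
    linarith [(abs_lt.1 (hclose j hj)).2, le_abs_self g]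
  calc q n j = c n j / D * (D / c n j * q n j) := by field_simp
    _ ≤ c n j / D * (|g| + 1) := mul_le_mul_of_nonneg_left hbound (by positivity)
    _ ≤ δ / (|g| + 1) * (|g| + 1) := mul_le_mul_of_nonneg_right (hsmall j hj).le hC.le
    _ = δ := div_mul_cancel₀ _ hC.ne'

theorem tendsto_sum_sq_zero_of_forall_le (hq0 : ∀ n, ∀ j ∈ s n, 0 ≤ q n j)
    (hsum : Tendsto (fun n => ∑ j ∈ s n, q n j) atTop (𝓝 g))
    (hsmall : ∀ δ > 0, ∀ᶠ n in atTop, ∀ j ∈ s n, q n j ≤ δ) :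
    Tendsto (fun n => ∑ j ∈ s n, q n j ^ 2) atTop (𝓝 0) := by
  rw [Metric.tendsto_nhds]
  intro ε hε
  have hC : 0 < |g| + 1 := by positivity
  have hbdd : ∀ᶠ n in atTop, ∑ j ∈ s n, q n j < |g| + 1 :=
    hsum.eventually (gt_mem_nhds (by linarith [le_abs_self g]))
  filter_upwards [hbdd, hsmall (ε / 2 / (|g| + 1)) (by positivity)] with n hbdd hle
  rw [Real.dist_0_eq_abs, abs_of_nonneg (sum_nonneg fun j _ => sq_nonneg _)]
  calc ∑ j ∈ s n, q n j ^ 2 ≤ ∑ j ∈ s n, ε / 2 / (|g| + 1) * q n j :=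
        sum_le_sum fun j hj => by
          rw [sq]; exact mul_le_mul_of_nonneg_right (hle j hj) (hq0 n j hj)
    _ = ε / 2 / (|g| + 1) * ∑ j ∈ s n, q n j := by rw [mul_sum]
    _ ≤ ε / 2 / (|g| + 1) * (|g| + 1) := by gcongr
    _ < ε := by rw [div_mul_cancel₀ _ hC.ne']; exact half_lt_self hε

theorem tendsto_prod_one_sub (hq0 : ∀ n, ∀ j ∈ s n, 0 ≤ q n j)
    (hsum : Tendsto (fun n => ∑ j ∈ s n, q n j) atTop (𝓝 g))
    (hsmall : ∀ δ > 0, ∀ᶠ n in atTop, ∀ j ∈ s n, q n j ≤ δ) :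
    Tendsto (fun n => ∏ j ∈ s n, (1 - q n j)) atTop (𝓝 (Real.exp (-g))) := by
  have herr : Tendsto (fun n => ∑ j ∈ s n, (Real.log (1 - q n j) + q n j)) atTop (𝓝 0) := by
    have hsq := (tendsto_sum_sq_zero_of_forall_le hq0 hsum hsmall).const_mul 2
    rw [mul_zero] at hsq
    refine squeeze_zero_norm' ?_ hsq
    filter_upwards [hsmall (1 / 2) one_half_pos] with n hn
    rw [Real.norm_eq_abs, mul_sum]
    exact (abs_sum_le_sum_abs _ _).trans
      (sum_le_sum fun j hj => abs_log_one_sub_add_le (hq0 n j hj) (hn j hj))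
  have hlog : Tendsto (fun n => ∑ j ∈ s n, Real.log (1 - q n j)) atTop (𝓝 (-g)) := by
    simpa [sum_add_distrib] using herr.sub hsum
  refine ((Real.continuous_exp.tendsto _).comp hlog).congr' ?_
  filter_upwards [hsmall (1 / 2) one_half_pos] with n hn
  rw [Function.comp_apply, Real.exp_sum]
  exact prod_congr rfl fun j hj => Real.exp_log (by linarith [hn j hj])

end TriangularArray

theorem ProbabilityTheory.iIndepFun.measure_forall_mem {Ω ι β : Type*} [MeasurableSpace Ω]
    [MeasurableSpace β] {Pr : Measure Ω} {s : Finset ι} {X : ι → Ω → β}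
    (h : iIndepFun (fun j : s => X j) Pr) {A : ι → Set β} (hA : ∀ j, MeasurableSet (A j)) :
    Pr {ω | ∀ j ∈ s, X j ω ∈ A j} = ∏ j ∈ s, Pr (X j ⁻¹' A j) := by
  have hset : {ω | ∀ j ∈ s, X j ω ∈ A j} = ⋂ j ∈ (univ : Finset s), X j ⁻¹' A j := by
    ext ω
    simp
  rw [hset, h.measure_inter_preimage_eq_mul univ fun j _ => hA j]
  exact prod_coe_sort s fun j => Pr (X j ⁻¹' A j)

theorem measure_Ioc_eq_measure_Iic {ν : Measure ℝ} {a : ℝ} (ha : ν (Iic a) = 0) (x : ℝ) :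
    ν (Ioc a x) = ν (Iic x) := by
  rw [← Iic_sdiff_Iic]
  exact measure_sdiff_null ha

theorem measureReal_Iic_eq_one_sub_measureReal_Ici {ν : Measure ℝ} [IsProbabilityMeasure ν]
    {x : ℝ} (hx : ν {x} = 0) : ν.real (Iic x) = 1 - ν.real (Ici x) := by
  rw [← compl_Ioi, probReal_compl_eq_one_sub measurableSet_Ioi, measureReal_def,
    measureReal_def, measure_congr (Ioi_ae_eq_Ici' hx)]

theorem max_converges_in_distribution_general
    (Ω : Type*) [MeasurableSpace Ω] (Pr : Measure Ω)
    (X : ℕ → ℕ → Ω → ℝ)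
    (hXmeas : ∀ n j, 1 ≤ j → j ≤ n → Measurable (X n j))
    -- for each `n`, the variables `X n 1, …, X n n` are independent
    (hindep : ∀ n, ProbabilityTheory.iIndepFun
      (fun j : ↥(Finset.Icc 1 n) => X n j) Pr)
    -- `P n j` is the (nonatomic, supported on `(0,∞)`) distribution of `X n j`
    (P : ℕ → ℕ → Measure ℝ)
    (hPdist : ∀ n j, 1 ≤ j → j ≤ n → Measure.map (X n j) Pr = P n j)
    (hPprob : ∀ n j, 1 ≤ j → j ≤ n → IsProbabilityMeasure (P n j))
    (hPpos : ∀ n j, 1 ≤ j → j ≤ n → P n j (Set.Iic 0) = 0)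
    (hPna : ∀ n j, 1 ≤ j → j ≤ n → ∀ x : ℝ, P n j {x} = 0)
    (c : ℕ → ℕ → ℝ) (d : ℕ → ℝ)
    (hc : ∀ n j, 1 ≤ j → j ≤ n → 0 < c n j)
    (hd : ∀ n, d n = ∑ j ∈ Finset.Icc 1 n, c n j)
    -- H1 : `d n → ∞` and `(max_{j ≤ n} c n j) / d n → 0`
    (hmax : ∀ ε : ℝ, 0 < ε → ∃ N, ∀ n ≥ N, ∀ j ∈ Finset.Icc 1 n, c n j / d n < ε)
    -- H2' : `γ` nonatomic, finite on half-lines, uniform convergence of scaled tails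
    (γ : Measure ℝ)
    (hunif : ∀ t : ℝ, 0 < t → ∀ ε : ℝ, 0 < ε → ∃ N, ∀ n ≥ N, ∀ j ∈ Finset.Icc 1 n,
      |d n / c n j * (P n j (Set.Ici t)).toReal - (γ (Set.Ici t)).toReal| < ε) :
    ∀ x : ℝ, 0 < x →
      (∀ n : ℕ, (Pr {ω | ∀ j ∈ Finset.Icc 1 n, X n j ω ≤ x}).toReal
        = ∏ j ∈ Finset.Icc 1 n, (P n j (Set.Ioc 0 x)).toReal) ∧
      Tendsto (fun n => ∏ j ∈ Finset.Icc 1 n, (P n j (Set.Ioc 0 x)).toReal)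
        atTop (nhds (Real.exp (-(γ (Set.Ici x)).toReal))) := by
  intro x hx
  simp only [hd] at hmax hunif
  have hIoc : ∀ n, ∀ j ∈ Finset.Icc 1 n, P n j (Ioc 0 x) = Pr (X n j ⁻¹' Iic x) := by
    intro n j hj
    obtain ⟨hj1, hjn⟩ := Finset.mem_Icc.1 hj
    rw [measure_Ioc_eq_measure_Iic (hPpos n j hj1 hjn), ← hPdist n j hj1 hjn,
      Measure.map_apply (hXmeas n j hj1 hjn) measurableSet_Iic]
  refine ⟨fun n => ?_, ?_⟩
  · have hprod := (hindep n).measure_forall_mem (A := fun _ => Iic x) fun _ => measurableSet_Iic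
    simp only [Set.mem_Iic] at hprod
    rw [hprod, ENNReal.toReal_prod]
    exact prod_congr rfl fun j hj => by rw [hIoc n j hj]
  have hcpos : ∀ n, ∀ j ∈ Finset.Icc 1 n, 0 < c n j := fun n j hj =>
    hc n j (Finset.mem_Icc.1 hj).1 (Finset.mem_Icc.1 hj).2
  have hne : ∀ᶠ n in atTop, (Finset.Icc 1 n).Nonempty :=
    (eventually_ge_atTop 1).mono fun n hn => nonempty_Icc.2 hn
  have htail : ∀ ε > 0, ∀ᶠ n in atTop, ∀ j ∈ Finset.Icc 1 n, |(∑ i ∈ Finset.Icc 1 n, c n i) /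
      c n j * (P n j (Ici x)).toReal - (γ (Ici x)).toReal| < ε :=
    fun ε hε => eventually_atTop.2 (hunif x hx ε hε)
  refine (tendsto_prod_one_sub (fun _ _ _ => ENNReal.toReal_nonneg)
    (tendsto_sum_of_uniform_scaled hne hcpos htail)
    fun δ hδ => eventually_forall_le_of_uniform_scaled hcpos
      (fun ε hε => eventually_atTop.2 (hmax ε hε)) htail hδ).congr fun n =>
    prod_congr rfl fun j hj => ?_
  obtain ⟨hj1, hjn⟩ := Finset.mem_Icc.1 hj
  have := hPprob n j hj1 hjn
  rw [measure_Ioc_eq_measure_Iic (hPpos n j hj1 hjn), ← measureReal_def, ← measureReal_def,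
    measureReal_Iic_eq_one_sub_measureReal_Ici (hPna n j hj1 hjn x)]

/-- Under hypotheses H1 and H2', the maximum of the n-th row converges in
distribution: for every `x > 0`,
`P(max_{1≤j≤n} X_{n,j} ≤ x) = ∏_{j=1}^n P_{n,j}((0,x]) → exp(-γ([x,∞)))`. -/
theorem max_converges_in_distribution
    (Ω : Type*) [MeasurableSpace Ω] (Pr : Measure Ω) [IsProbabilityMeasure Pr]
    (X : ℕ → ℕ → Ω → ℝ)
    (hXmeas : ∀ n j, 1 ≤ j → j ≤ n → Measurable (X n j))
    (hXpos : ∀ n j, 1 ≤ j → j ≤ n → ∀ ω, 0 < X n j ω)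
    -- for each `n`, the variables `X n 1, …, X n n` are independent
    (hindep : ∀ n, ProbabilityTheory.iIndepFun
      (fun j : ↥(Finset.Icc 1 n) => X n j) Pr)
    -- `P n j` is the (nonatomic, supported on `(0,∞)`) distribution of `X n j`
    (P : ℕ → ℕ → Measure ℝ)
    (hPdist : ∀ n j, 1 ≤ j → j ≤ n → Measure.map (X n j) Pr = P n j)
    (hPprob : ∀ n j, 1 ≤ j → j ≤ n → IsProbabilityMeasure (P n j))
    (hPpos : ∀ n j, 1 ≤ j → j ≤ n → P n j (Set.Iic 0) = 0)
    (hPna : ∀ n j, 1 ≤ j → j ≤ n → ∀ x : ℝ, P n j {x} = 0)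
    (c : ℕ → ℕ → ℝ) (d : ℕ → ℝ)
    (hc : ∀ n j, 1 ≤ j → j ≤ n → 0 < c n j)
    (hd : ∀ n, d n = ∑ j ∈ Finset.Icc 1 n, c n j)
    -- H1 : `d n → ∞` and `(max_{j ≤ n} c n j) / d n → 0`
    (hdtop : Tendsto d atTop atTop)
    (hmax : ∀ ε : ℝ, 0 < ε → ∃ N, ∀ n ≥ N, ∀ j ∈ Finset.Icc 1 n, c n j / d n < ε)
    -- H1 : the measures `μ_n = ∑_j (c n j / d n) δ_{j/n}` converge weakly to `μ`
    (μ : Measure ℝ)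
    (hμsupp : μ ((Set.Icc (0:ℝ) 1)ᶜ) = 0)
    (hweak : ∀ f : ℝ → ℝ, Continuous f → (∃ C, ∀ x, |f x| ≤ C) →
      Tendsto (fun n => ∫ x, f x ∂(∑ j ∈ Finset.Icc 1 n,
          ENNReal.ofReal (c n j / d n) • Measure.dirac ((j : ℝ) / (n : ℝ))))
        atTop (nhds (∫ x, f x ∂μ)))
    -- H2' : `γ` nonatomic, finite on half-lines, uniform convergence of scaled tails
    (γ : Measure ℝ)
    (hγ0 : γ (Set.Iic 0) = 0)
    (hγna : ∀ x : ℝ, 0 < x → γ {x} = 0)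
    (hγfin : ∀ t : ℝ, 0 < t → γ (Set.Ici t) ≠ ⊤)
    (hunif : ∀ t : ℝ, 0 < t → ∀ ε : ℝ, 0 < ε → ∃ N, ∀ n ≥ N, ∀ j ∈ Finset.Icc 1 n,
      |d n / c n j * (P n j (Set.Ici t)).toReal - (γ (Set.Ici t)).toReal| < ε) :
    ∀ x : ℝ, 0 < x →
      (∀ n : ℕ, (Pr {ω | ∀ j ∈ Finset.Icc 1 n, X n j ω ≤ x}).toReal
        = ∏ j ∈ Finset.Icc 1 n, (P n j (Set.Ioc 0 x)).toReal) ∧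
      Tendsto (fun n => ∏ j ∈ Finset.Icc 1 n, (P n j (Set.Ioc 0 x)).toReal)
        atTop (nhds (Real.exp (-(γ (Set.Ici x)).toReal))) :=
  max_converges_in_distribution_general Ω Pr X hXmeas hindep P hPdist hPprob hPpos hPna c d hc hd
    hmax γ hunif
end

section
/- Under the hypotheses H1* and H3 below, with r(x) = x^{−α} for some α > 0, the normalized maximum has a Fréchet limit: for every x > 0, P( d_n^{−1/α} · max_{1≤j≤n} X_j ≤ x ) = ∏_{j=1}^n F_j(d_n^{1/α} x) → exp( − x^{−α} ) as n → ∞. -/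
open MeasureTheory Filter Finset Real Topology

/-! With `y = d_n^{1/α} x` one has `c_j y^{-α} = (c_j / d_n) x^{-α}`, so H3 turns the product into
`exp (-x^{-α} (1 + ∑_j (c_j / d_n) δ_j(y)))`. The weights `c_j / d_n` form a probability vector
and `y → ∞`, so the uniform decay of the `δ_j` makes this weighted average tend to `0`. -/

lemma measure_forall_Icc_le_eq_prod {Ω : Type*} [MeasurableSpace Ω] {P : Measure Ω}
    {X : ℕ → Ω → ℝ} (h : ProbabilityTheory.iIndepFun (fun j : {j : ℕ // 1 ≤ j} => X j) P)
    (n : ℕ) (t : ℝ) :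
    P {ω | ∀ j ∈ Icc 1 n, X j ω ≤ t} = ∏ j ∈ Icc 1 n, P {ω | X j ω ≤ t} := by
  have hS := h.measure_inter_preimage_eq_mul ((Icc 1 n).subtype (1 ≤ ·))
    (sets := fun _ => Set.Iic t) fun _ _ => measurableSet_Iic
  rw [prod_subtype_of_mem (fun j => P (X j ⁻¹' Set.Iic t)) fun j hj => (mem_Icc.1 hj).1] at hS
  change _ = ∏ j ∈ Icc 1 n, P (X j ⁻¹' Set.Iic t)
  rw [← hS]
  congr 1
  ext ω
  simp only [Set.mem_ofPred_eq, Set.mem_iInter, Set.mem_preimage, Set.mem_Iic, mem_subtype,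
    Subtype.forall]
  exact ⟨fun h j _ hj => h j hj, fun h j hj => h j (mem_Icc.1 hj).1 hj⟩

lemma rpow_neg_inv_mul_le_iff {d : ℝ} (hd : 0 < d) (α t x : ℝ) :
    d ^ (-(1 / α)) * t ≤ x ↔ t ≤ d ^ (1 / α) * x := by
  rw [rpow_neg hd.le, inv_mul_le_iff₀ (rpow_pos_of_pos hd _)]

lemma rpow_inv_mul_rpow_neg {d : ℝ} (hd : 0 ≤ d) {α : ℝ} (hα : α ≠ 0) {x : ℝ} (hx : 0 ≤ x) :
    (d ^ (1 / α) * x) ^ (-α) = d⁻¹ * x ^ (-α) := by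
  rw [mul_rpow (rpow_nonneg hd _) hx, ← rpow_mul hd, one_div_mul_eq_div, neg_div,
    div_self hα, rpow_neg_one]

lemma prod_exp_neg_rescaled {ι : Type*} {S : Finset ι} {c a : ι → ℝ} {d : ℝ}
    (hd : ∑ i ∈ S, c i = d) (hd0 : 0 < d) {α : ℝ} (hα : α ≠ 0) {x : ℝ} (hx : 0 ≤ x) :
    ∏ i ∈ S, exp (-(c i * (d ^ (1 / α) * x) ^ (-α) * (1 + a i)))
      = exp (-(x ^ (-α) * (1 + ∑ i ∈ S, c i / d * a i))) := by
  have hw : ∑ i ∈ S, c i / d = 1 := by rw [← sum_div, hd, div_self hd0.ne']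
  rw [← exp_sum, rpow_inv_mul_rpow_neg hd0.le hα hx]
  congr 1
  calc ∑ i ∈ S, -(c i * (d⁻¹ * x ^ (-α)) * (1 + a i))
      = -(x ^ (-α) * ∑ i ∈ S, (c i / d + c i / d * a i)) := by
        rw [mul_sum, ← sum_neg_distrib]
        exact sum_congr rfl fun i _ => by ring
    _ = -(x ^ (-α) * (1 + ∑ i ∈ S, c i / d * a i)) := by rw [sum_add_distrib, hw]

lemma tendsto_sum_mul_nhds_zero {ι : Type*} {l : Filter ℕ} {S : ℕ → Finset ι}
    {w a : ℕ → ι → ℝ} (hw : ∀ᶠ n in l, ∀ i ∈ S n, 0 ≤ w n i)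
    (hw1 : ∀ᶠ n in l, ∑ i ∈ S n, w n i = 1)
    (ha : ∀ ε > 0, ∀ᶠ n in l, ∀ i ∈ S n, |a n i| ≤ ε) :
    Tendsto (fun n => ∑ i ∈ S n, w n i * a n i) l (𝓝 0) := by
  refine Metric.tendsto_nhds.2 fun ε hε => ?_
  filter_upwards [hw, hw1, ha (ε / 2) (half_pos hε)] with n hwn hw1n han
  have hmem : ∑ i ∈ S n, w n i • a n i ∈ Metric.closedBall (0 : ℝ) (ε / 2) :=
    (convex_closedBall 0 _).sum_mem hwn hw1n fun i hi => by
      simpa [Real.dist_eq] using han i hi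
  rw [Metric.mem_closedBall] at hmem
  exact hmem.trans_lt (half_lt_self hε)

theorem normalized_max_frechet_limit_general
    (Ω : Type*) [MeasurableSpace Ω] (Pr : Measure Ω)
    (X : ℕ → Ω → ℝ)
    -- `X_1, X_2, …` are independent
    (hindep : ProbabilityTheory.iIndepFun
      (fun j : {j : ℕ // 1 ≤ j} => X j) Pr)
    -- `F j` is the distribution function of `X j`, strictly increasing and continuous,
    -- with `F j 0 = 0` and `F j x > 0` for `x > 0`
    (F : ℕ → ℝ → ℝ)
    (hFdist : ∀ j, 1 ≤ j → ∀ x : ℝ, F j x = (Pr {ω | X j ω ≤ x}).toReal)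
    -- H3 : `ν_j(x) = c_j x^{-α} (1 + δ_j(x))` with the stated bounds
    (α : ℝ) (hα : 0 < α)
    (c : ℕ → ℝ) (hc : ∀ j, 1 ≤ j → 0 < c j)
    (δ : ℕ → ℝ → ℝ)
    (hδunif : ∀ ε : ℝ, 0 < ε → ∃ x₀ : ℝ, ∀ x : ℝ, x₀ ≤ x → ∀ j, 1 ≤ j → |δ j x| < ε)
    (hH3 : ∀ j, 1 ≤ j → ∀ x : ℝ, 0 < x →
      F j x = Real.exp (-(c j * x ^ (-α) * (1 + δ j x))))
    -- H1* : `d n → ∞`, `(max_{j ≤ n} c j) / d n → 0`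
    (d : ℕ → ℝ)
    (hd : ∀ n, d n = ∑ j ∈ Finset.Icc 1 n, c j)
    (hdtop : Tendsto d atTop atTop) :
    ∀ x : ℝ, 0 < x →
      (∀ n : ℕ, 1 ≤ n →
        (Pr {ω | ∀ j ∈ Finset.Icc 1 n, (d n) ^ (-(1/α)) * X j ω ≤ x}).toReal
          = ∏ j ∈ Finset.Icc 1 n, F j ((d n) ^ (1/α) * x)) ∧
      Tendsto (fun n : ℕ => ∏ j ∈ Finset.Icc 1 n, F j ((d n) ^ (1/α) * x))
        atTop (nhds (Real.exp (-(x ^ (-α))))) := by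
  intro x hx
  have hdpos : ∀ n, 1 ≤ n → 0 < d n := fun n hn =>
    hd n ▸ sum_pos (fun j hj => hc j (mem_Icc.1 hj).1) ⟨1, mem_Icc.2 ⟨le_rfl, hn⟩⟩
  refine ⟨fun n hn => ?_, ?_⟩
  · simp_rw [rpow_neg_inv_mul_le_iff (hdpos n hn)]
    rw [measure_forall_Icc_le_eq_prod hindep, ENNReal.toReal_prod]
    exact prod_congr rfl fun j hj => (hFdist j (mem_Icc.1 hj).1 _).symm
  set y := fun n : ℕ => d n ^ (1 / α) * x
  have hy : Tendsto y atTop atTop :=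
    ((tendsto_rpow_atTop (by positivity)).comp hdtop).atTop_mul_const hx
  have hprod : (fun n => ∏ j ∈ Icc 1 n, F j (y n))
      =ᶠ[atTop] fun n => exp (-(x ^ (-α) * (1 + ∑ j ∈ Icc 1 n, c j / d n * δ j (y n)))) := by
    filter_upwards [eventually_ge_atTop 1] with n hn
    rw [← prod_exp_neg_rescaled (hd n).symm (hdpos n hn) hα.ne' hx.le]
    exact prod_congr rfl fun j hj =>
      hH3 j (mem_Icc.1 hj).1 _ (mul_pos (rpow_pos_of_pos (hdpos n hn) _) hx)
  have havg : Tendsto (fun n => ∑ j ∈ Icc 1 n, c j / d n * δ j (y n)) atTop (𝓝 0) := by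
    refine tendsto_sum_mul_nhds_zero ?_ ?_ fun ε hε => ?_
    · filter_upwards [eventually_ge_atTop 1] with n hn j hj
      exact div_nonneg (hc j (mem_Icc.1 hj).1).le (hdpos n hn).le
    · filter_upwards [eventually_ge_atTop 1] with n hn
      rw [← sum_div, ← hd n, div_self (hdpos n hn).ne']
    · obtain ⟨x₀, hx₀⟩ := hδunif ε hε
      filter_upwards [hy.eventually_ge_atTop x₀] with n hn j hj
      exact (hx₀ _ hn j (mem_Icc.1 hj).1).le
  refine Tendsto.congr' hprod.symm ?_
  simpa using ((havg.const_add 1).const_mul (x ^ (-α))).neg.rexp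

/-- Under hypotheses H1* and H3 with `r(x) = x^{-α}`, the normalized maximum has
a Fréchet limit: for every `x > 0`,
`P(d_n^{-1/α} · max_{1≤j≤n} X_j ≤ x) = ∏_{j=1}^n F_j(d_n^{1/α} x) → exp(-x^{-α})`. -/
theorem normalized_max_frechet_limit
    (Ω : Type*) [MeasurableSpace Ω] (Pr : Measure Ω) [IsProbabilityMeasure Pr]
    (X : ℕ → Ω → ℝ)
    (hXmeas : ∀ j, 1 ≤ j → Measurable (X j))
    (hXpos : ∀ j, 1 ≤ j → ∀ ω, 0 < X j ω)
    -- `X_1, X_2, …` are independent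
    (hindep : ProbabilityTheory.iIndepFun
      (fun j : {j : ℕ // 1 ≤ j} => X j) Pr)
    -- `F j` is the distribution function of `X j`, strictly increasing and continuous,
    -- with `F j 0 = 0` and `F j x > 0` for `x > 0`
    (F : ℕ → ℝ → ℝ)
    (hFdist : ∀ j, 1 ≤ j → ∀ x : ℝ, F j x = (Pr {ω | X j ω ≤ x}).toReal)
    (hFcont : ∀ j, 1 ≤ j → Continuous (F j))
    (hFmono : ∀ j, 1 ≤ j → StrictMonoOn (F j) (Set.Ici 0))
    (hF0 : ∀ j, 1 ≤ j → F j 0 = 0)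
    (hFpos : ∀ j, 1 ≤ j → ∀ x : ℝ, 0 < x → 0 < F j x)
    -- H3 : `ν_j(x) = c_j x^{-α} (1 + δ_j(x))` with the stated bounds
    (α : ℝ) (hα : 0 < α)
    (c : ℕ → ℝ) (hc : ∀ j, 1 ≤ j → 0 < c j)
    (δ : ℕ → ℝ → ℝ)
    (hδcont : ∀ j, 1 ≤ j → ContinuousOn (δ j) (Set.Ioi 0))
    (m M : ℝ) (hm0 : 0 < m) (hm1 : m < 1)
    (hδbdd : ∀ j, 1 ≤ j → ∀ x : ℝ, 0 < x → -m ≤ δ j x ∧ δ j x ≤ M)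
    (hδunif : ∀ ε : ℝ, 0 < ε → ∃ x₀ : ℝ, ∀ x : ℝ, x₀ ≤ x → ∀ j, 1 ≤ j → |δ j x| < ε)
    (hH3 : ∀ j, 1 ≤ j → ∀ x : ℝ, 0 < x →
      F j x = Real.exp (-(c j * x ^ (-α) * (1 + δ j x))))
    -- H1* : `d n → ∞`, `(max_{j ≤ n} c j) / d n → 0`
    (d : ℕ → ℝ)
    (hd : ∀ n, d n = ∑ j ∈ Finset.Icc 1 n, c j)
    (hdtop : Tendsto d atTop atTop)
    (hmax : ∀ ε : ℝ, 0 < ε → ∃ N, ∀ n ≥ N, ∀ j ∈ Finset.Icc 1 n, c j / d n < ε)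
    -- H1* : the measures `μ_n = ∑_j (c j / d n) δ_{j/n}` converge weakly to `μ`
    (μ : Measure ℝ)
    (hμsupp : μ ((Set.Icc (0:ℝ) 1)ᶜ) = 0)
    (hweak : ∀ f : ℝ → ℝ, Continuous f → (∃ C, ∀ x, |f x| ≤ C) →
      Tendsto (fun n => ∫ x, f x ∂(∑ j ∈ Finset.Icc 1 n,
          ENNReal.ofReal (c j / d n) • Measure.dirac ((j : ℝ) / (n : ℝ))))
        atTop (nhds (∫ x, f x ∂μ))) :
    ∀ x : ℝ, 0 < x →
      (∀ n : ℕ, 1 ≤ n →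
        (Pr {ω | ∀ j ∈ Finset.Icc 1 n, (d n) ^ (-(1/α)) * X j ω ≤ x}).toReal
          = ∏ j ∈ Finset.Icc 1 n, F j ((d n) ^ (1/α) * x)) ∧
      Tendsto (fun n : ℕ => ∏ j ∈ Finset.Icc 1 n, F j ((d n) ^ (1/α) * x))
        atTop (nhds (Real.exp (-(x ^ (-α))))) :=
  normalized_max_frechet_limit_general Ω Pr X hindep F hFdist α hα c hc δ hδunif hH3 d hd hdtop
end

section
/- (Scaled-tail regular variation of the triangular array of Section 4.) Under hypothesis H3 below with r(x) = x^{−α}, and assuming d_n := Σ_{j=1}^n c_j → ∞ and (max_{j≤n} c_j)/d_n → 0, the normalized tails converge to x^{−α} uniformly in j ≤ n and in x on half-lines: for every a > 0, sup_{1≤j≤n} sup_{x≥a} | x^{α} · (d_n/c_j) · (1 − F_j(d_n^{1/α} x)) − 1 | → 0 as n → ∞. -/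
/-!
Only the behaviour of `δ_j` at large arguments matters: for `x ≥ a` the point
`y = d_n^{1/α} x` tends to infinity uniformly, so `δ_j(y)` is uniformly small, and
`c_j y^{-α} = s := (c_j/d_n) x^{-α} ≤ (c_j/d_n) a^{-α}` is uniformly small as well. The
normalized tail is `s⁻¹ (1 - exp (-s (1 + δ_j(y))))`, and `|1 - e^{-t} - t| ≤ t²` puts it
within `|δ_j(y)| + O(s)` of `1`.
-/

open MeasureTheory Filter

namespace Real

theorem abs_one_sub_exp_neg_sub_le {t : ℝ} (ht : 0 ≤ t) : |1 - exp (-t) - t| ≤ t ^ 2 := by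
  rcases le_or_gt t 1 with ht1 | ht1
  · have h := abs_exp_sub_one_sub_id_le (x := -t) (by rwa [abs_neg, abs_of_nonneg ht])
    rwa [show 1 - exp (-t) - t = -(exp (-t) - 1 - -t) by ring, abs_neg, ← neg_sq]
  · have hexp : 0 < exp (-t) ∧ exp (-t) ≤ 1 := ⟨exp_pos _, exp_le_one_iff.mpr (by linarith)⟩
    rw [abs_le]
    constructor <;> nlinarith

theorem abs_inv_mul_one_sub_exp_neg_sub_one_le {s δ : ℝ} (hs : 0 < s) (hδ : |δ| ≤ 1) :
    |s⁻¹ * (1 - exp (-(s * (1 + δ)))) - 1| ≤ |δ| + 4 * s := by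
  obtain ⟨hδl, hδu⟩ := abs_le.mp hδ
  have ht : 0 ≤ s * (1 + δ) := mul_nonneg hs.le (by linarith)
  have hsq : (1 + δ) ^ 2 ≤ 4 := by nlinarith
  have hsplit : s⁻¹ * (1 - exp (-(s * (1 + δ)))) - 1
      = s⁻¹ * (1 - exp (-(s * (1 + δ))) - s * (1 + δ)) + δ := by
    field_simp
    ring
  calc |s⁻¹ * (1 - exp (-(s * (1 + δ)))) - 1|
      ≤ s⁻¹ * |1 - exp (-(s * (1 + δ))) - s * (1 + δ)| + |δ| := by
        rw [hsplit, ← abs_of_pos (inv_pos.mpr hs), ← abs_mul, abs_of_pos (inv_pos.mpr hs)]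
        exact abs_add_le _ _
    _ ≤ s⁻¹ * (s * (1 + δ)) ^ 2 + |δ| := by
        gcongr
        exact abs_one_sub_exp_neg_sub_le ht
    _ = s * (1 + δ) ^ 2 + |δ| := by field_simp
    _ ≤ |δ| + 4 * s := by nlinarith

end Real

theorem abs_rescaled_tail_sub_one_le {α c d x δ : ℝ} (hα : α ≠ 0) (hc : 0 < c) (hd : 0 < d)
    (hx : 0 < x) (hδ : |δ| ≤ 1) :
    |x ^ α * (d / c) * (1 - Real.exp (-(c * (d ^ (1 / α) * x) ^ (-α) * (1 + δ)))) - 1|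
      ≤ |δ| + 4 * (c / d * x ^ (-α)) := by
  have hscale : (d ^ (1 / α) * x) ^ (-α) = d⁻¹ * x ^ (-α) := by
    rw [Real.mul_rpow (by positivity) hx.le, ← Real.rpow_mul hd.le, one_div_mul_eq_div,
      neg_div, div_self hα, Real.rpow_neg_one]
  have hrewrite : x ^ α * (d / c) * (1 - Real.exp (-(c * (d ^ (1 / α) * x) ^ (-α) * (1 + δ))))
      = (c / d * x ^ (-α))⁻¹ * (1 - Real.exp (-(c / d * x ^ (-α) * (1 + δ)))) := by
    rw [hscale, Real.rpow_neg hx.le, mul_inv, inv_inv, inv_div]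
    ring_nf
  rw [hrewrite]
  exact Real.abs_inv_mul_one_sub_exp_neg_sub_one_le (by positivity) hδ

theorem scaled_tail_regular_variation_general
    (F : ℕ → ℝ → ℝ)
    -- H3 : `ν_j(x) = c_j x^{-α} (1 + δ_j(x))` with the stated bounds
    (α : ℝ) (hα : 0 < α)
    (c : ℕ → ℝ) (hc : ∀ j, 1 ≤ j → 0 < c j)
    (δ : ℕ → ℝ → ℝ)
    (hδunif : ∀ ε : ℝ, 0 < ε → ∃ x₀ : ℝ, ∀ x : ℝ, x₀ ≤ x → ∀ j, 1 ≤ j → |δ j x| < ε)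
    (hH3 : ∀ j, 1 ≤ j → ∀ x : ℝ, 0 < x →
      F j x = Real.exp (-(c j * x ^ (-α) * (1 + δ j x))))
    -- H1* : `d n → ∞`, `(max_{j ≤ n} c j) / d n → 0`
    (d : ℕ → ℝ)
    (hdtop : Tendsto d atTop atTop)
    (hmax : ∀ ε : ℝ, 0 < ε → ∃ N, ∀ n ≥ N, ∀ j ∈ Finset.Icc 1 n, c j / d n < ε)
    :    ∀ a : ℝ, 0 < a → ∀ ε : ℝ, 0 < ε → ∃ N, ∀ n ≥ N, ∀ j, 1 ≤ j → j ≤ n →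
      ∀ x : ℝ, a ≤ x →
        |x ^ α * (d n / c j) * (1 - F j ((d n) ^ (1/α) * x)) - 1| < ε := by
  intro a ha ε hε
  obtain ⟨x₀, hx₀⟩ := hδunif (min (ε / 2) 1) (by positivity)
  have hdpos : ∀ᶠ n in atTop, 0 < d n := hdtop.eventually_gt_atTop 0
  have hscale : Tendsto (fun n ↦ d n ^ (1 / α) * a) atTop atTop :=
    ((tendsto_rpow_atTop (by positivity)).comp hdtop).atTop_mul_const ha
  have hδsmall : ∀ᶠ n in atTop, ∀ j, 1 ≤ j → ∀ x, a ≤ x →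
      |δ j (d n ^ (1 / α) * x)| < min (ε / 2) 1 := by
    filter_upwards [hdpos, hscale.eventually_ge_atTop x₀] with n hdn hn j hj x hx
    exact hx₀ _ (hn.trans (by gcongr)) j hj
  have hratio : ∀ᶠ n in atTop, ∀ j ∈ Finset.Icc 1 n, c j / d n < ε * a ^ α / 8 :=
    eventually_atTop.mpr (hmax _ (by positivity))
  obtain ⟨N, hN⟩ := eventually_atTop.mp ((hdpos.and hδsmall).and hratio)
  refine ⟨N, fun n hn j hj hjn x hxa ↦ ?_⟩
  obtain ⟨⟨hdn, hδn⟩, hcn⟩ := hN n hn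
  have hδ := hδn j hj x hxa
  have hx : 0 < x := ha.trans_le hxa
  have hs : c j / d n * x ^ (-α) ≤ ε / 8 :=
    calc c j / d n * x ^ (-α) ≤ c j / d n * a ^ (-α) :=
          mul_le_mul_of_nonneg_left (Real.rpow_le_rpow_of_nonpos ha hxa (by linarith))
            (div_pos (hc j hj) hdn).le
      _ ≤ ε * a ^ α / 8 * a ^ (-α) :=
          mul_le_mul_of_nonneg_right (hcn j (Finset.mem_Icc.mpr ⟨hj, hjn⟩)).le (by positivity)
      _ = ε / 8 := by rw [Real.rpow_neg ha.le]; field_simp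
  rw [hH3 j hj (d n ^ (1 / α) * x) (by positivity)]
  calc _ ≤ |δ j (d n ^ (1 / α) * x)| + 4 * (c j / d n * x ^ (-α)) :=
        abs_rescaled_tail_sub_one_le hα.ne' (hc j hj) hdn hx (hδ.le.trans (min_le_right _ _))
    _ < ε := by linarith [min_le_left (ε / 2) 1]

/-- (Scaled-tail regular variation of the triangular array.) Under hypothesis H3
with `r(x) = x^{-α}`, and assuming `d_n → ∞` and `(max_{j≤n} c_j)/d_n → 0`, the
normalized tails converge to `x^{-α}` uniformly in `j ≤ n` and in `x` on
half-lines: for every `a > 0`,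
`sup_{1≤j≤n} sup_{x≥a} |x^α (d_n/c_j)(1 - F_j(d_n^{1/α} x)) - 1| → 0`. -/
theorem scaled_tail_regular_variation
    (Ω : Type*) [MeasurableSpace Ω] (Pr : Measure Ω) [IsProbabilityMeasure Pr]
    (X : ℕ → Ω → ℝ)
    (hXmeas : ∀ j, 1 ≤ j → Measurable (X j))
    (hXpos : ∀ j, 1 ≤ j → ∀ ω, 0 < X j ω)
    -- `X_1, X_2, …` are independent
    (hindep : ProbabilityTheory.iIndepFun
      (fun j : {j : ℕ // 1 ≤ j} => X j) Pr)
    -- `F j` is the distribution function of `X j`, continuous,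
    -- with `F j 0 = 0` and `F j x > 0` for `x > 0`
    (F : ℕ → ℝ → ℝ)
    (hFdist : ∀ j, 1 ≤ j → ∀ x : ℝ, F j x = (Pr {ω | X j ω ≤ x}).toReal)
    (hFcont : ∀ j, 1 ≤ j → Continuous (F j))
    (hF0 : ∀ j, 1 ≤ j → F j 0 = 0)
    (hFpos : ∀ j, 1 ≤ j → ∀ x : ℝ, 0 < x → 0 < F j x)
    -- H3 : `ν_j(x) = c_j x^{-α} (1 + δ_j(x))` with the stated bounds
    (α : ℝ) (hα : 0 < α)
    (c : ℕ → ℝ) (hc : ∀ j, 1 ≤ j → 0 < c j)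
    (δ : ℕ → ℝ → ℝ)
    (hδcont : ∀ j, 1 ≤ j → ContinuousOn (δ j) (Set.Ioi 0))
    (m M : ℝ) (hm0 : 0 < m) (hm1 : m < 1)
    (hδbdd : ∀ j, 1 ≤ j → ∀ x : ℝ, 0 < x → -m ≤ δ j x ∧ δ j x ≤ M)
    (hδunif : ∀ ε : ℝ, 0 < ε → ∃ x₀ : ℝ, ∀ x : ℝ, x₀ ≤ x → ∀ j, 1 ≤ j → |δ j x| < ε)
    (hH3 : ∀ j, 1 ≤ j → ∀ x : ℝ, 0 < x →
      F j x = Real.exp (-(c j * x ^ (-α) * (1 + δ j x))))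
    -- H1* : `d n → ∞`, `(max_{j ≤ n} c j) / d n → 0`
    (d : ℕ → ℝ)
    (hd : ∀ n, d n = ∑ j ∈ Finset.Icc 1 n, c j)
    (hdtop : Tendsto d atTop atTop)
    (hmax : ∀ ε : ℝ, 0 < ε → ∃ N, ∀ n ≥ N, ∀ j ∈ Finset.Icc 1 n, c j / d n < ε)
    :    ∀ a : ℝ, 0 < a → ∀ ε : ℝ, 0 < ε → ∃ N, ∀ n ≥ N, ∀ j, 1 ≤ j → j ≤ n →
      ∀ x : ℝ, a ≤ x →
        |x ^ α * (d n / c j) * (1 - F j ((d n) ^ (1/α) * x)) - 1| < ε :=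
  scaled_tail_regular_variation_general F α hα c hc δ hδunif hH3 d hdtop hmax
end
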